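/- arXiv:1804.07546 — 2 statements merged into one kernel-verified Lean document; each statement's English description precedes it below -/
import Mathlib

section
/- For every nonnegative integer k, every a, and every y with y ≠ 0 and y ≠ 1, the reflection formula (−1)^k · β_k(a, 1/y) = y · β_k(1 − a, y) holds. -/
/-!
Substituting `t ↦ -t` in the generating function of `β_k(a, 1/y)` multiplies its `t^k`-coefficient
by `(-1)^k`, and the identity `y⁻¹e^{-t} - 1 = -y⁻¹e^{-t}(y e^t - 1)` turns the substituted series
`-t e^{-at} / (y⁻¹e^{-t} - 1)` into `y · t e^{(1-a)t} / (y e^t - 1)`, the generating function of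
`y · β_k(1 - a, y)`.
-/

/-- The twisted Bernoulli polynomial `β_k(x,y)`, defined (for `y ≠ 1`) by the
exponential generating function `t·e^{xt}/(y·e^t − 1) = Σ_{k≥0} β_k(x,y) t^k/k!`. -/
noncomputable def twistedBernoulli {K : Type*} [Field K] [CharZero K] (k : ℕ) (x y : K) : K :=
  (k.factorial : K) *
    PowerSeries.coeff k
      (PowerSeries.X * PowerSeries.rescale x (PowerSeries.exp K) *
        (PowerSeries.C y * PowerSeries.exp K - 1)⁻¹)

open PowerSeries

namespace PowerSeries

theorem constantCoeff_rescale {R : Type*} [CommSemiring R] (c : R) (f : R⟦X⟧) :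
    constantCoeff (rescale c f) = constantCoeff f := by
  rw [← coeff_zero_eq_constantCoeff_apply, coeff_rescale, pow_zero, one_mul,
    coeff_zero_eq_constantCoeff_apply]

theorem rescale_C {R : Type*} [CommSemiring R] (c r : R) : rescale c (C r) = C r := by
  ext (_ | _) <;> simp [coeff_C]

-- A series with zero constant coefficient has the junk inverse `0`; both sides vanish then.
theorem rescale_inv {K : Type*} [Field K] (c : K) (f : K⟦X⟧) :
    rescale c f⁻¹ = (rescale c f)⁻¹ := by
  by_cases hf : constantCoeff f = 0
  · rw [inv_eq_zero.mpr hf, inv_eq_zero.mpr (by rwa [constantCoeff_rescale]), map_zero]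
  · rw [eq_inv_iff_mul_eq_one (by rwa [constantCoeff_rescale]), ← map_mul,
      PowerSeries.inv_mul_cancel _ hf, map_one]

end PowerSeries

section TwistedBernoulli

variable {K : Type*} [Field K] [CharZero K]

noncomputable def twistedBernoulliPowerSeries (x y : K) : K⟦X⟧ :=
  X * rescale x (exp K) * (C y * exp K - 1)⁻¹

theorem twistedBernoulli_eq_factorial_mul_coeff (k : ℕ) (x y : K) :
    twistedBernoulli k x y = k.factorial * coeff k (twistedBernoulliPowerSeries x y) :=
  rfl

theorem rescale_neg_one_twistedBernoulliPowerSeries_inv (a : K) {y : K} (hy : y ≠ 0) :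
    rescale (-1) (twistedBernoulliPowerSeries a y⁻¹) =
      C y * twistedBernoulliPowerSeries (1 - a) y := by
  set E : K⟦X⟧ := rescale (-1) (exp K)
  have hexp_mul_E : exp K * E = 1 := exp_mul_exp_neg_eq_one
  have hCy : C y * C y⁻¹ = 1 := by rw [← map_mul, mul_inv_cancel₀ hy, map_one]
  have hfactor : C y⁻¹ * E - 1 = (C y * exp K - 1) * -(C y⁻¹ * E) := by
    linear_combination (exp K * E) * hCy + hexp_mul_E
  have hinv : (-(C y⁻¹ * E))⁻¹ = -(C y * exp K) := by
    rw [inv_eq_iff_mul_eq_one (by simp [E, constantCoeff_rescale, hy])]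
    linear_combination (exp K * E) * hCy + hexp_mul_E
  have hshift : rescale (-a) (exp K) * exp K = rescale (1 - a) (exp K) := by
    simpa [show -a + 1 = 1 - a by ring] using exp_mul_exp_eq_exp_add (-a) (1 : K)
  simp only [twistedBernoulliPowerSeries, map_mul, map_sub, map_one, rescale_neg_one_X,
    rescale_rescale, rescale_inv, rescale_C, mul_neg_one]
  rw [hfactor, PowerSeries.mul_inv_rev, hinv, ← hshift]
  ring

end TwistedBernoulli

theorem twistedBernoulli_reflection_general {K : Type*} [Field K] [CharZero K]
    (k : ℕ) (a y : K) (hy0 : y ≠ 0) :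
    (-1 : K) ^ k * twistedBernoulli k a y⁻¹ = y * twistedBernoulli k (1 - a) y := by
  have h := congrArg (coeff k) (rescale_neg_one_twistedBernoulliPowerSeries_inv a hy0)
  rw [coeff_rescale, coeff_C_mul] at h
  rw [twistedBernoulli_eq_factorial_mul_coeff, twistedBernoulli_eq_factorial_mul_coeff,
    mul_left_comm, h, mul_left_comm]

theorem twistedBernoulli_reflection {K : Type*} [Field K] [CharZero K]
    (k : ℕ) (a y : K) (hy0 : y ≠ 0) (hy1 : y ≠ 1) :
    (-1 : K) ^ k * twistedBernoulli k a y⁻¹ = y * twistedBernoulli k (1 - a) y :=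
  twistedBernoulli_reflection_general k a y hy0
end

section
/- Let z ∈ ℂ_p with |z−1|_p ≥ 1 and k ≥ 1. Then ∫_{ℤ_p^*} 1 dμ_{k,z} = β_k(z) − p^{k−1} β_k(z^p). -/
open Filter

/-!
The distribution relation `∑_{a<n} n^{k-1} z^a β_k(a/n, z^n) = β_k(z)` is the identity of
generating series `∑_{a<n} z^a e^{at/n} / (z^n e^t − 1) = 1 / (z e^{t/n} − 1)`, a geometric
sum.
Applied at level `p^N` to all residues, and (writing `a = p b`) at level `p^{N-1}` to `z^p` for
the residues divisible by `p`, it shows that the Riemann sums over units are constant for `N ≥ 1`.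
The only analytic input is `z^{p^N} ≠ 1`: since `(w − 1)^p ≡ w^p − 1` modulo `p`, every
`p`-power root of unity `ζ` satisfies `‖ζ − 1‖ < 1`.
-/

open Finset PowerSeries

section Ultrametric

variable {K : Type*} [NormedField K] [IsUltrametricDist K] {p : ℕ}

lemma norm_sub_one_lt_one_of_norm_pow_sub_one_lt_one (hp : p.Prime) (hp1 : ‖(p : K)‖ < 1)
    {w : K} (hw : ‖w‖ ≤ 1) (h : ‖w ^ p - 1‖ < 1) : ‖w - 1‖ < 1 := by
  have hw1 : ‖w - 1‖ ≤ 1 := by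
    rw [sub_eq_add_neg]
    exact (IsUltrametricDist.norm_add_le_max _ _).trans (by simp [hw])
  set S := ∑ i ∈ Ioo 0 p, (w - 1) ^ i * 1 ^ (p - i) * ((p.choose i / p : ℕ) : K)
  have hS : ‖S‖ ≤ 1 := by
    refine IsUltrametricDist.norm_sum_le_of_forall_le_of_nonneg zero_le_one fun i _ => ?_
    rw [one_pow, mul_one, norm_mul, norm_pow]
    exact mul_le_one₀ (pow_le_one₀ (norm_nonneg _) hw1)
      (norm_nonneg _) (IsUltrametricDist.norm_natCast_le_one K _)
  -- `(w - 1) ^ p ≡ w ^ p - 1` modulo `p`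
  have hfrob : (w - 1) ^ p = (w ^ p - 1) + -(p * S) := by
    have := add_pow_prime_eq' hp (w - 1) 1
    rw [sub_add_cancel, one_pow] at this
    rw [this]; ring
  have hpS : ‖-(p * S : K)‖ < 1 := by
    rw [norm_neg, norm_mul]
    exact (mul_le_of_le_one_right (norm_nonneg _) hS).trans_lt hp1
  have : ‖w - 1‖ ^ p < 1 := by
    rw [← norm_pow, hfrob]
    exact (IsUltrametricDist.norm_add_le_max _ _).trans_lt (max_lt h hpS)
  exact (pow_lt_one_iff_of_nonneg (norm_nonneg _) hp.ne_zero).mp this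

lemma norm_sub_one_lt_one_of_pow_prime_pow_eq_one (hp : p.Prime) (hp1 : ‖(p : K)‖ < 1)
    {z : K} {N : ℕ} (h : z ^ p ^ N = 1) : ‖z - 1‖ < 1 := by
  induction N generalizing z with
  | zero => simp_all
  | succ N ih =>
    have hz : ‖z‖ = 1 := (pow_eq_one_iff_of_nonneg (norm_nonneg z) (pow_pos hp.pos _).ne').mp
      (by rw [← norm_pow, h, norm_one])
    rw [pow_succ', pow_mul] at h
    exact norm_sub_one_lt_one_of_norm_pow_sub_one_lt_one hp hp1 hz.le (ih h)

end Ultrametric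

lemma PowerSeries.rescale_C_s15 {R : Type*} [CommSemiring R] (c a : R) : rescale c (C a) = C a := by
  ext n
  rcases n with _ | n <;> simp [coeff_rescale, coeff_C]

lemma PowerSeries.constantCoeff_rescale_s15 {R : Type*} [CommSemiring R] (c : R) (f : R⟦X⟧) :
    constantCoeff (rescale c f) = constantCoeff f := by
  rw [← coeff_zero_eq_constantCoeff_apply, ← coeff_zero_eq_constantCoeff_apply, coeff_rescale,
    pow_zero, one_mul]

lemma PowerSeries.rescale_inv_s15 {k : Type*} [Field k] (c : k) (f : k⟦X⟧) :
    rescale c f⁻¹ = (rescale c f)⁻¹ := by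
  by_cases hf : constantCoeff f = 0
  · rw [PowerSeries.inv_eq_zero.mpr hf,
      PowerSeries.inv_eq_zero.mpr (by rwa [constantCoeff_rescale_s15]), map_zero]
  · rw [PowerSeries.eq_inv_iff_mul_eq_one (by rwa [constantCoeff_rescale_s15]), ← map_mul,
      PowerSeries.inv_mul_cancel f hf, map_one]

section TwistedBernoulli

variable {K : Type*} [Field K] [CharZero K]

/-- `t·e^{xt}/(y·e^t − 1)` divided by `t`: its `m`-th coefficient is `β_{m+1}(x,y)/(m+1)!`. -/
noncomputable def twistedBernoulliSeries (x y : K) : K⟦X⟧ :=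
  rescale x (exp K) * (C y * exp K - 1)⁻¹

lemma twistedBernoulli_zero (x y : K) : twistedBernoulli 0 x y = 0 := by
  simp [twistedBernoulli, mul_assoc]

lemma twistedBernoulli_succ (m : ℕ) (x y : K) :
    twistedBernoulli (m + 1) x y =
      ((m + 1).factorial : K) * coeff m (twistedBernoulliSeries x y) := by
  rw [twistedBernoulli, twistedBernoulliSeries, mul_assoc X, coeff_succ_X_mul]

lemma sum_C_pow_mul_twistedBernoulliSeries {n : ℕ} (hn : n ≠ 0) {z : K} (hzn : z ^ n ≠ 1) :
    ∑ a ∈ range n, C (z ^ a) * twistedBernoulliSeries ((a : K) / n) (z ^ n)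
      = rescale (n : K)⁻¹ (twistedBernoulliSeries 0 z) := by
  have hz : z ≠ 1 := by rintro rfl; simp at hzn
  set w : K⟦X⟧ := C z * rescale (n : K)⁻¹ (exp K)
  have hw_pow (a : ℕ) : w ^ a = C (z ^ a) * rescale ((a : K) / n) (exp K) := by
    rw [mul_pow, ← map_pow, ← map_pow, exp_pow_eq_rescale_exp, rescale_rescale, div_eq_mul_inv]
  have hw_sub : w - 1 = rescale (n : K)⁻¹ (C z * exp K - 1) := by
    rw [map_sub, map_mul, rescale_C_s15, map_one]
  have hu : constantCoeff (C (z ^ n) * exp K - 1) ≠ 0 := by simpa [sub_eq_zero] using hzn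
  have hv : constantCoeff (C z * exp K - 1) ≠ 0 := by simpa [sub_eq_zero] using hz
  have hgeom : (∑ a ∈ range n, w ^ a) * (w - 1) = C (z ^ n) * exp K - 1 := by
    rw [geom_sum_mul, hw_pow, div_self (Nat.cast_ne_zero.mpr hn), rescale_one]; rfl
  simp only [twistedBernoulliSeries, ← mul_assoc, ← hw_pow, ← sum_mul, rescale_zero_apply,
    constantCoeff_exp, map_one, one_mul]
  rw [rescale_inv_s15, ← hw_sub, PowerSeries.eq_inv_iff_mul_eq_one
    (by rwa [hw_sub, constantCoeff_rescale_s15]), mul_right_comm, hgeom,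
    PowerSeries.mul_inv_cancel _ hu]

lemma twistedBernoulli_distribution (k : ℕ) {n : ℕ} (hn : n ≠ 0) {z : K} (hzn : z ^ n ≠ 1) :
    ∑ a ∈ range n, (n : K) ^ (k - 1) * z ^ a * twistedBernoulli k ((a : K) / n) (z ^ n)
      = twistedBernoulli k 0 z := by
  rcases k with _ | m
  · simp [twistedBernoulli_zero]
  have hcoeff := congrArg (coeff m) (sum_C_pow_mul_twistedBernoulliSeries hn hzn)
  simp only [map_sum, coeff_C_mul, coeff_rescale] at hcoeff
  simp only [twistedBernoulli_succ, Nat.add_sub_cancel]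
  calc ∑ a ∈ range n, (n : K) ^ m * z ^ a *
        (((m + 1).factorial : K) * coeff m (twistedBernoulliSeries ((a : K) / n) (z ^ n)))
      = ((m + 1).factorial : K) * (n : K) ^ m *
          ∑ a ∈ range n, z ^ a * coeff m (twistedBernoulliSeries ((a : K) / n) (z ^ n)) := by
        rw [mul_sum]; exact sum_congr rfl fun a _ => by ring
    _ = ((m + 1).factorial : K) * coeff m (twistedBernoulliSeries 0 z) := by
        rw [hcoeff, inv_pow, ← mul_assoc, mul_assoc _ _ (_⁻¹),
          mul_inv_cancel₀ (pow_ne_zero _ (Nat.cast_ne_zero.mpr hn)), mul_one]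

lemma sum_range_mul_filter_dvd {M : Type*} [AddCommMonoid M] (f : ℕ → M) {p : ℕ}
    (hp : 0 < p) (m : ℕ) :
    ∑ a ∈ (range (p * m)).filter (p ∣ ·), f a = ∑ b ∈ range m, f (p * b) := by
  rw [← sum_image fun _ _ _ _ => Nat.eq_of_mul_eq_mul_left hp]
  congr 1
  ext a
  simp only [mem_filter, mem_range, mem_image]
  constructor
  · rintro ⟨ha, b, rfl⟩
    exact ⟨b, Nat.lt_of_mul_lt_mul_left ha, rfl⟩
  · rintro ⟨b, hb, rfl⟩
    exact ⟨Nat.mul_lt_mul_of_pos_left hb hp, dvd_mul_right p b⟩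

lemma sum_filter_not_dvd_twistedBernoulli (k : ℕ) {p : ℕ} (hp : 0 < p) (M : ℕ) {z : K}
    (hz : z ^ p ^ (M + 1) ≠ 1) :
    ∑ a ∈ (range (p ^ (M + 1))).filter (fun a => ¬ p ∣ a),
        (p : K) ^ ((M + 1) * (k - 1)) * z ^ a *
          twistedBernoulli k ((a : K) / (p : K) ^ (M + 1)) (z ^ (p ^ (M + 1)))
      = twistedBernoulli k 0 z - (p : K) ^ (k - 1) * twistedBernoulli k 0 (z ^ p) := by
  set F : ℕ → K := fun a => (p : K) ^ ((M + 1) * (k - 1)) * z ^ a *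
    twistedBernoulli k ((a : K) / (p : K) ^ (M + 1)) (z ^ (p ^ (M + 1)))
  have htotal : ∑ a ∈ range (p ^ (M + 1)), F a = twistedBernoulli k 0 z := by
    rw [← twistedBernoulli_distribution k (pow_ne_zero _ hp.ne') hz]
    simp only [F, Nat.cast_pow, pow_mul]
  have hdvd : ∑ a ∈ (range (p ^ (M + 1))).filter (p ∣ ·), F a
      = (p : K) ^ (k - 1) * twistedBernoulli k 0 (z ^ p) := by
    rw [pow_succ', sum_range_mul_filter_dvd F hp,
      ← twistedBernoulli_distribution k (pow_ne_zero _ hp.ne')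
        (by rwa [← pow_mul, ← pow_succ']), mul_sum]
    refine sum_congr rfl fun b _ => ?_
    have hp0 : (p : K) ≠ 0 := Nat.cast_ne_zero.mpr hp.ne'
    simp only [F, Nat.cast_mul, Nat.cast_pow]
    rw [pow_succ' (p : K) M, mul_div_mul_left _ _ hp0, ← pow_mul z p (p ^ M), ← pow_succ',
      pow_mul z p b]
    ring
  rw [← hdvd, ← htotal]
  exact eq_sub_of_add_eq' (sum_filter_add_sum_filter_not _ _ F)

end TwistedBernoulli

theorem integral_one_units_twistedBernoulli_measure_general
    {K : Type*} [NormedField K] [IsUltrametricDist K] [CharZero K]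
    (p : ℕ) (hp : p.Prime) (hnorm : ‖(p : K)‖ = (p : ℝ)⁻¹)
    (k : ℕ) (z : K) (hz : 1 ≤ ‖z - 1‖) :
    Tendsto (fun N : ℕ =>
        ∑ a ∈ (Finset.range (p ^ N)).filter (fun a => ¬ p ∣ a),
          (p : K) ^ (N * (k - 1)) * z ^ a *
            twistedBernoulli k ((a : K) / (p : K) ^ N) (z ^ (p ^ N)))
      atTop
      (nhds (twistedBernoulli k 0 z - (p : K) ^ (k - 1) * twistedBernoulli k 0 (z ^ p))) := by
  have hp1 : ‖(p : K)‖ < 1 := hnorm ▸ inv_lt_one_of_one_lt₀ (mod_cast hp.one_lt)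
  refine tendsto_atTop_of_eventually_const (i₀ := 1) fun N hN => ?_
  obtain ⟨M, rfl⟩ := Nat.exists_eq_add_of_le' hN
  refine sum_filter_not_dvd_twistedBernoulli k hp.pos M fun h => ?_
  exact hz.not_gt (norm_sub_one_lt_one_of_pow_prime_pow_eq_one hp hp1 h)

/-- `∫_{ℤ_p^*} 1 dμ_{k,z} = β_k(z) − p^{k−1} β_k(z^p)`: the Riemann sums over residues
coprime to `p` converge to `β_k(0,z) − p^{k−1} β_k(0,z^p)`. -/
theorem integral_one_units_twistedBernoulli_measure
    {K : Type*} [NormedField K] [IsUltrametricDist K] [CharZero K]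
    (p : ℕ) (hp : p.Prime) (hnorm : ‖(p : K)‖ = (p : ℝ)⁻¹)
    (k : ℕ) (hk : 1 ≤ k) (z : K) (hz : 1 ≤ ‖z - 1‖) :
    Tendsto (fun N : ℕ =>
        ∑ a ∈ (Finset.range (p ^ N)).filter (fun a => ¬ p ∣ a),
          (p : K) ^ (N * (k - 1)) * z ^ a *
            twistedBernoulli k ((a : K) / (p : K) ^ N) (z ^ (p ^ N)))
      atTop
      (nhds (twistedBernoulli k 0 z - (p : K) ^ (k - 1) * twistedBernoulli k 0 (z ^ p))) :=
  integral_one_units_twistedBernoulli_measure_general p hp hnorm k z hz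
end
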